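/- arXiv:2509.24265 — 3 statements merged into one kernel-verified Lean document; each statement's English description precedes it below -/
import Mathlib

section
/- Let c > 0 and r ≥ 0 be integers. In the field ℚ(v, K), one has [K;−c,r]_v = ∑_{s=0}^{r} (−1)^s v^{c(r−s)} [c+s−1 choose s]_v K^s [K;0,r−s]_v. -/
/-- The field `ℚ(v, K)` of rational functions in two variables, realized as `ℚ(v)(K)`. -/
noncomputable abbrev F2 : Type := RatFunc (RatFunc ℚ)

/-- The variable `v` of `ℚ(v, K)`. -/
noncomputable def vv : F2 := RatFunc.C RatFunc.X

/-- The variable `K` of `ℚ(v, K)`. -/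
noncomputable def KK : F2 := RatFunc.X

/-- `[K;c,t]_v = ∏_{s=1}^{t} (K v^{c−s+1} − K^{−1} v^{−c+s−1})/(v^s − v^{−s})`. -/
noncomputable def Kbr (c : ℤ) (t : ℕ) : F2 :=
  ∏ s ∈ Finset.range t,
    (KK * vv ^ (c - (s : ℤ)) - KK⁻¹ * vv ^ (-c + (s : ℤ))) /
      (vv ^ ((s : ℤ) + 1) - vv ^ (-(s : ℤ) - 1))

/-- The balanced quantum number `[c]_v = (v^c − v^{−c})/(v − v^{−1})` for `c ∈ ℤ`. -/
noncomputable def qintF (c : ℤ) : F2 := (vv ^ c - vv ^ (-c)) / (vv - vv⁻¹)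

/-- The balanced quantum factorial `[m]!_v`. -/
noncomputable def qfactF (m : ℕ) : F2 := ∏ k ∈ Finset.range m, qintF ((k : ℤ) + 1)

/-- `[c choose m]_v = [c]_v[c−1]_v⋯[c−m+1]_v/[m]!_v` for `c ∈ ℤ`, `m ∈ ℕ`. -/
noncomputable def qbinomF (c : ℤ) (m : ℕ) : F2 :=
  (∏ k ∈ Finset.range m, qintF (c - (k : ℤ))) / qfactF m

/-!
Both sides, as functions `f c r`, satisfy the recurrence
`f (c + 1) (m + 1) = v ^ (m + 1) * f c (m + 1) - v ^ (-c) * K * f (c + 1) m`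
and agree at `c = 0` and at `r = 0`. For the left side the recurrence is an identity between the
last factors of the products, after shifting `[K; c - 1, t]` to `[K; c, t]`; for the right side it
holds term by term by the quantum Pascal rule
`[n choose u + 1] = v ^ (u + 1) [n - 1 choose u + 1] + v ^ (u + 1 - n) [n - 1 choose u]`.
-/

open Finset Polynomial

lemma vv_ne_zero : vv ≠ 0 := by simp [vv, RatFunc.X_ne_zero]

lemma vv_pow_ne_one {n : ℕ} (hn : n ≠ 0) : vv ^ n ≠ 1 := by
  intro h
  rw [vv, ← map_pow, ← map_one RatFunc.C, RatFunc.C_injective.eq_iff,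
    ← RatFunc.algebraMap_X, ← map_pow, ← map_one (algebraMap ℚ[X] (RatFunc ℚ)),
    (IsFractionRing.injective ℚ[X] (RatFunc ℚ)).eq_iff] at h
  simpa [hn] using congrArg Polynomial.natDegree h

lemma vv_zpow_sub_zpow_neg_ne_zero {m : ℕ} (hm : m ≠ 0) :
    vv ^ (m : ℤ) - vv ^ (-(m : ℤ)) ≠ 0 := by
  intro h
  have hsq : vv ^ (2 * m) = 1 := by
    rw [← zpow_natCast, Nat.cast_mul, Nat.cast_two, two_mul, zpow_add₀ vv_ne_zero]
    nth_rewrite 1 [sub_eq_zero.mp h]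
    rw [← zpow_add₀ vv_ne_zero, neg_add_cancel, zpow_zero]
  exact vv_pow_ne_one (by omega) hsq

lemma vv_sub_inv_ne_zero : vv - vv⁻¹ ≠ 0 := by
  simpa using vv_zpow_sub_zpow_neg_ne_zero one_ne_zero

lemma qintF_zero : qintF 0 = 0 := by simp [qintF]

lemma qintF_natCast_add_one_ne_zero (m : ℕ) : qintF ((m : ℤ) + 1) ≠ 0 := by
  refine div_ne_zero ?_ vv_sub_inv_ne_zero
  simpa using vv_zpow_sub_zpow_neg_ne_zero m.succ_ne_zero

lemma qintF_eq_add (n : ℤ) (u : ℕ) :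
    qintF n =
      vv ^ ((u : ℤ) + 1) * qintF (n - 1 - u) + vv ^ ((u : ℤ) + 1 - n) * qintF (u + 1) := by
  simp only [qintF, ← mul_div_assoc, ← add_div, mul_sub, ← zpow_add₀ vv_ne_zero]
  ring_nf

lemma qbinomF_zero (n : ℤ) : qbinomF n 0 = 1 := by simp [qbinomF, qfactF]

lemma qbinomF_natCast_self_succ (k : ℕ) : qbinomF k (k + 1) = 0 := by
  rw [qbinomF, prod_eq_zero (self_mem_range_succ k) (by simp [qintF_zero]), zero_div]

lemma qbinomF_succ (n : ℤ) (u : ℕ) :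
    qbinomF n (u + 1) =
      vv ^ ((u : ℤ) + 1) * qbinomF (n - 1) (u + 1) +
        vv ^ ((u : ℤ) + 1 - n) * qbinomF (n - 1) u := by
  set P := ∏ k ∈ range u, qintF (n - 1 - k)
  have hnum : ∏ k ∈ range (u + 1), qintF (n - k) = qintF n * P := by
    rw [prod_range_succ', mul_comm]
    simp_rw [Nat.cast_add, Nat.cast_one, Nat.cast_zero, sub_zero, sub_add_eq_sub_sub_swap, P]
  have hfact : qfactF (u + 1) = qfactF u * qintF ((u : ℤ) + 1) := prod_range_succ _ _
  rw [qbinomF, qbinomF, qbinomF, hnum, prod_range_succ, hfact,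
    ← mul_div_mul_right P (qfactF u) (qintF_natCast_add_one_ne_zero u),
    ← mul_div_assoc, ← mul_div_assoc, ← add_div]
  congr 1
  linear_combination P * qintF_eq_add n u

noncomputable def kbrNum (c s : ℤ) : F2 := KK * vv ^ (c - s) - KK⁻¹ * vv ^ (-c + s)

noncomputable def kbrDen (s : ℤ) : F2 := vv ^ (s + 1) - vv ^ (-s - 1)

lemma kbrDen_natCast_ne_zero (m : ℕ) : kbrDen m ≠ 0 := by
  rw [kbrDen, ← neg_add']
  exact_mod_cast vv_zpow_sub_zpow_neg_ne_zero m.succ_ne_zero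

lemma Kbr_eq_prod_div (c : ℤ) (t : ℕ) :
    Kbr c t = (∏ s ∈ range t, kbrNum c s) / ∏ s ∈ range t, kbrDen s :=
  prod_div_distrib _ _

lemma Kbr_succ (c : ℤ) (t : ℕ) : Kbr c (t + 1) = Kbr c t * (kbrNum c t / kbrDen t) :=
  prod_range_succ _ _

lemma Kbr_sub_one_mul_kbrNum_zero (c : ℤ) (t : ℕ) :
    Kbr (c - 1) t * kbrNum c 0 = Kbr c t * kbrNum c t := by
  have hshift : ∀ s : ℕ, kbrNum (c - 1) s = kbrNum c ((s + 1 : ℕ) : ℤ) := fun s => by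
    simp only [kbrNum]; push_cast; ring_nf
  rw [Kbr_eq_prod_div, Kbr_eq_prod_div, div_mul_eq_mul_div, div_mul_eq_mul_div]
  congr 1
  simp_rw [hshift]
  rw [← prod_range_succ (fun s : ℕ => kbrNum c s), prod_range_succ' (fun s : ℕ => kbrNum c s)]
  rfl

lemma Kbr_sub_one_succ (c : ℤ) (m : ℕ) :
    Kbr (c - 1) (m + 1) =
      vv ^ ((m : ℤ) + 1) * Kbr c (m + 1) - vv ^ c * KK * Kbr (c - 1) m := by
  have hlast : kbrNum (c - 1) m + vv ^ c * KK * kbrDen m = vv ^ ((m : ℤ) + 1) * kbrNum c 0 := by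
    simp only [kbrNum, kbrDen, mul_sub, sub_mul, mul_assoc, mul_comm, ← zpow_add₀ vv_ne_zero]
    ring_nf
  refine eq_sub_of_add_eq ?_
  rw [Kbr_succ, Kbr_succ, ← mul_div_assoc, ← mul_div_assoc,
    div_add' _ _ _ (kbrDen_natCast_ne_zero m), ← mul_div_assoc]
  congr 1
  linear_combination Kbr (c - 1) m * hlast + vv ^ ((m : ℤ) + 1) * Kbr_sub_one_mul_kbrNum_zero c m

noncomputable def kbrExpansionTerm (c : ℤ) (r s : ℕ) : F2 :=
  (-1 : F2) ^ s * vv ^ (c * ((r : ℤ) - (s : ℤ))) * qbinomF (c + (s : ℤ) - 1) s * KK ^ s *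
    Kbr 0 (r - s)

noncomputable def kbrExpansion (c : ℤ) (r : ℕ) : F2 :=
  ∑ s ∈ range (r + 1), kbrExpansionTerm c r s

lemma kbrExpansionTerm_succ_succ_succ (c : ℤ) (m t : ℕ) :
    kbrExpansionTerm (c + 1) (m + 1) (t + 1) =
      vv ^ ((m : ℤ) + 1) * kbrExpansionTerm c (m + 1) (t + 1) -
        vv ^ (-c) * KK * kbrExpansionTerm (c + 1) m t := by
  have hpascal : qbinomF (c + t + 1) (t + 1) =
      vv ^ ((t : ℤ) + 1) * qbinomF (c + t) (t + 1) + vv ^ (-c) * qbinomF (c + t) t := by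
    rw [qbinomF_succ, add_sub_cancel_right, show (t : ℤ) + 1 - (c + t + 1) = -c by ring]
  have hpow : vv ^ ((m : ℤ) + 1) * vv ^ (c * ((m : ℤ) - t)) =
      vv ^ ((c + 1) * ((m : ℤ) - t)) * vv ^ ((t : ℤ) + 1) := by
    rw [← zpow_add₀ vv_ne_zero, ← zpow_add₀ vv_ne_zero]; ring_nf
  simp only [kbrExpansionTerm, Nat.add_sub_add_right]
  push_cast
  rw [show (m : ℤ) + 1 - (t + 1) = m - t by ring, show c + 1 + (t + 1) - 1 = c + t + 1 by ring,
    show c + (t + 1) - 1 = c + t by ring, show c + 1 + t - 1 = c + t by ring, hpascal]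
  linear_combination (-(-1 : F2) ^ (t + 1) * qbinomF (c + t) (t + 1) * KK ^ (t + 1) *
      Kbr 0 (m - t)) * hpow

lemma kbrExpansion_succ_succ (c : ℤ) (m : ℕ) :
    kbrExpansion (c + 1) (m + 1) =
      vv ^ ((m : ℤ) + 1) * kbrExpansion c (m + 1) - vv ^ (-c) * KK * kbrExpansion (c + 1) m := by
  have hhead :
      kbrExpansionTerm (c + 1) (m + 1) 0 = vv ^ ((m : ℤ) + 1) * kbrExpansionTerm c (m + 1) 0 := by
    simp only [kbrExpansionTerm, pow_zero, Nat.cast_zero, sub_zero, one_mul, mul_one, qbinomF_zero]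
    rw [← mul_assoc, ← zpow_add₀ vv_ne_zero]
    congr 2
    push_cast
    ring
  rw [kbrExpansion, kbrExpansion, kbrExpansion, sum_range_succ' _ (m + 1),
    sum_range_succ' _ (m + 1), mul_add, mul_sum, mul_sum, add_sub_right_comm,
    ← sum_sub_distrib, hhead]
  simp_rw [kbrExpansionTerm_succ_succ_succ]

lemma kbrExpansion_zero_left (r : ℕ) : kbrExpansion 0 r = Kbr 0 r := by
  rw [kbrExpansion, sum_eq_single_of_mem 0 (by simp)]
  · simp [kbrExpansionTerm, qbinomF_zero]
  · rintro (_ | k) - hk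
    · exact absurd rfl hk
    · simp [kbrExpansionTerm, qbinomF_natCast_self_succ]

lemma kbrExpansion_zero_right (c : ℤ) : kbrExpansion c 0 = 1 := by
  simp [kbrExpansion, kbrExpansionTerm, qbinomF_zero, Kbr]

lemma Kbr_neg_natCast_eq_kbrExpansion (c r : ℕ) : Kbr (-c) r = kbrExpansion c r := by
  induction c generalizing r with
  | zero => simpa using (kbrExpansion_zero_left r).symm
  | succ c ihc =>
    induction r with
    | zero => simp [kbrExpansion_zero_right, Kbr]
    | succ m ihm =>
      rw [Nat.cast_succ] at ihm ⊢
      rw [neg_add', Kbr_sub_one_succ, kbrExpansion_succ_succ, ihc, ← neg_add', ihm]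

theorem stmt4_general (c r : ℕ) :
    Kbr (-(c : ℤ)) r =
      ∑ s ∈ Finset.range (r + 1),
        (-1 : F2) ^ s * vv ^ ((c : ℤ) * ((r : ℤ) - (s : ℤ))) *
          qbinomF ((c : ℤ) + (s : ℤ) - 1) s * KK ^ s * Kbr 0 (r - s) :=
  Kbr_neg_natCast_eq_kbrExpansion c r

/-- For integers `c > 0`, `r ≥ 0`, in `ℚ(v,K)`:
`[K;−c,r]_v = ∑_{s=0}^{r} (−1)^s v^{c(r−s)} [c+s−1 choose s]_v K^s [K;0,r−s]_v`. -/
theorem stmt4 (c r : ℕ) (hc : 0 < c) :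
    Kbr (-(c : ℤ)) r =
      ∑ s ∈ Finset.range (r + 1),
        (-1 : F2) ^ s * vv ^ ((c : ℤ) * ((r : ℤ) - (s : ℤ))) *
          qbinomF ((c : ℤ) + (s : ℤ) - 1) s * KK ^ s * Kbr 0 (r - s) :=
  stmt4_general c r
end

section
/- Let A be an associative ℚ(v)-algebra containing elements e and ē and set a := ē e − v e ē. Assume a e = v^{−1} e a. Then for all m ≥ 1, ē e^{(m)} = v^m e^{(m)} ē + e^{(m−1)} a. -/
/-- `v^n` in `ℚ(v)` for `n : ℤ`. -/
noncomputable def qv (n : ℤ) : RatFunc ℚ := (RatFunc.X : RatFunc ℚ) ^ n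

/-- The balanced quantum integer `[m]_v = (v^m − v^{−m})/(v − v^{−1})` in `ℚ(v)`. -/
noncomputable def qint (m : ℕ) : RatFunc ℚ := (qv m - qv (-(m : ℤ))) / (qv 1 - qv (-1))

/-- The balanced quantum factorial `[m]!_v` in `ℚ(v)`. -/
noncomputable def qfact (m : ℕ) : RatFunc ℚ := ∏ k ∈ Finset.range m, qint (k + 1)

/-- The divided power `x^{(m)} = x^m/[m]!_v` in a `ℚ(v)`-algebra. -/
noncomputable def dp {A : Type*} [Ring A] [Algebra (RatFunc ℚ) A] (x : A) (m : ℕ) : A :=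
  (qfact m)⁻¹ • x ^ m

private lemma Xne : (RatFunc.X : RatFunc ℚ) ≠ 0 := RatFunc.X_ne_zero

private lemma qsub_ne (m : ℕ) (hm : 1 ≤ m) : qv m - qv (-(m:ℤ)) ≠ 0 := by
  intro h
  have h1 : (RatFunc.X : RatFunc ℚ) ^ (m:ℤ) = RatFunc.X ^ (-(m:ℤ)) := by
    simpa [qv] using sub_eq_zero.mp h
  have h2 : (RatFunc.X : RatFunc ℚ) ^ (2*m) = 1 := by
    have e1 : (RatFunc.X:RatFunc ℚ)^((m:ℤ)+(m:ℤ)) = RatFunc.X^((m:ℤ)+(-(m:ℤ))) := by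
      rw [zpow_add₀ Xne, zpow_add₀ Xne, h1]
    rw [add_neg_cancel, zpow_zero] at e1
    rw [show ((m:ℤ)+(m:ℤ)) = ((2*m : ℕ) : ℤ) by push_cast; ring, zpow_natCast] at e1
    exact e1
  have h3 : (Polynomial.X : Polynomial ℚ) ^ (2*m) = 1 := by
    apply RatFunc.algebraMap_injective ℚ
    simpa [map_pow, RatFunc.algebraMap_X] using h2
  have := congrArg Polynomial.natDegree h3
  simp [Polynomial.natDegree_X_pow] at this
  omega

private lemma qint_ne (m : ℕ) (hm : 1 ≤ m) : qint m ≠ 0 :=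
  div_ne_zero (qsub_ne m hm) (by simpa using qsub_ne 1 le_rfl)

private lemma qfact_ne (m : ℕ) : qfact m ≠ 0 := by
  rw [qfact, Finset.prod_ne_zero_iff]
  exact fun k _ => qint_ne (k+1) (by omega)

private lemma qint_one : qint 1 = 1 := by
  have hd : qv 1 - qv (-1) ≠ 0 := by simpa using qsub_ne 1 le_rfl
  simp only [qint, Nat.cast_one]
  exact div_self hd

private lemma qid (n : ℕ) : qv 1 * qint (n+1) + qv (-((n:ℤ)+1)) = qint (n+2) := by
  have hd : qv 1 - qv (-1) ≠ 0 := by simpa using qsub_ne 1 le_rfl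
  simp only [qint, qv] at *
  rw [eq_div_iff hd, add_mul, mul_assoc, div_mul_cancel₀ _ hd]
  push_cast
  simp only [mul_sub, sub_mul, ← zpow_add₀ Xne]
  ring_nf

private lemma qv_mul (m n : ℤ) : qv m * qv n = qv (m + n) := (zpow_add₀ Xne m n).symm

private lemma comm_pow {A : Type*} [Ring A] [Algebra (RatFunc ℚ) A] (e ebar : A)
    (ha : (ebar * e - qv 1 • (e * ebar)) * e = qv (-1) • (e * (ebar * e - qv 1 • (e * ebar)))) :
    ∀ m : ℕ,
    (ebar * e - qv 1 • (e * ebar)) * e ^ m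
      = qv (-(m:ℤ)) • (e ^ m * (ebar * e - qv 1 • (e * ebar))) := by
  intro m
  induction m with
  | zero => simp [qv]
  | succ n ih =>
    set a := ebar * e - qv 1 • (e * ebar) with hadef
    rw [pow_succ', ← mul_assoc, ha, smul_mul_assoc, mul_assoc, ih, mul_smul_comm, smul_smul,
      qv_mul, ← mul_assoc, ← pow_succ']
    norm_num

private lemma key {A : Type*} [Ring A] [Algebra (RatFunc ℚ) A] (e ebar : A)
    (ha : (ebar * e - qv 1 • (e * ebar)) * e = qv (-1) • (e * (ebar * e - qv 1 • (e * ebar)))) :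
    ∀ n : ℕ,
    ebar * e ^ (n+1) = qv (n+1) • (e ^ (n+1) * ebar)
      + qint (n+1) • (e ^ n * (ebar * e - qv 1 • (e * ebar))) := by
  intro n
  induction n with
  | zero =>
    simp [qint_one]
  | succ n ih =>
    set a := ebar * e - qv 1 • (e * ebar) with hadef
    have hsplit : ebar * e = qv 1 • (e * ebar) + a := by rw [hadef]; abel
    rw [pow_succ', ← mul_assoc, hsplit, add_mul, smul_mul_assoc, mul_assoc, ih,
      comm_pow e ebar ha (n+1), ← hadef]
    rw [mul_add, mul_smul_comm, mul_smul_comm, smul_add, smul_smul, smul_smul, qv_mul,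
      ← mul_assoc, ← pow_succ', ← mul_assoc, ← pow_succ']
    rw [add_assoc, ← add_smul]
    have h2 := qid n
    push_cast at h2 ⊢
    rw [show (1 : ℤ) + ((n:ℤ)+1) = (n:ℤ)+1+1 by ring]
    norm_num
    rw [show (-1 + -(n:ℤ)) = -((n:ℤ)+1) by ring, h2]

/-- Let `e, ē` be elements of a `ℚ(v)`-algebra and set `a := ē e − v e ē`.  If
`a e = v^{−1} e a`, then for all `m ≥ 1`, `ē e^{(m)} = v^m e^{(m)} ē + e^{(m−1)} a`. -/
theorem stmt8 {A : Type*} [Ring A] [Algebra (RatFunc ℚ) A] (e ebar : A)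
    (ha : (ebar * e - qv 1 • (e * ebar)) * e = qv (-1) • (e * (ebar * e - qv 1 • (e * ebar)))) :
    ∀ m : ℕ, 1 ≤ m →
      ebar * dp e m = qv m • (dp e m * ebar) + dp e (m - 1) * (ebar * e - qv 1 • (e * ebar)) := by
  intro m hm
  obtain ⟨n, rfl⟩ : ∃ n, m = n + 1 := ⟨m - 1, by omega⟩
  simp only [Nat.add_sub_cancel, dp]
  rw [mul_smul_comm, key e ebar ha n, smul_add, smul_smul, smul_smul]
  have hfact : (qfact (n+1))⁻¹ * qint (n+1) = (qfact n)⁻¹ := by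
    rw [qfact, Finset.prod_range_succ, ← qfact, mul_inv, mul_assoc,
      inv_mul_cancel₀ (qint_ne (n+1) (by omega)), mul_one]
  rw [hfact, mul_comm, ← smul_smul, smul_mul_assoc, smul_mul_assoc]
  push_cast
  ring_nf
end

section
/- Let A be an associative ℚ(v)-algebra containing elements x, e, z satisfying x e = v e x + v z and e z = v z e. Then for all m ≥ 1, x e^{(m)} = v^m e^{(m)} x + v^m z e^{(m−1)}. -/
/-
The relation `x e = v e x + v z` moves `x` past one factor `e` at the cost of a `z`, and
`e z = v z e` then moves every such `z` to the front. Commuting `x` through `e^m` thus gives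
`x e^m = v^m e^m x + (∑_{k<m} v^{2k+1}) z e^{m-1}`, and the geometric sum equals `v^m [m]_v`;
dividing by `[m]!_v = [m]_v [m-1]!_v` gives the claim.
-/

section Commutation

variable {R A : Type*} [CommSemiring R] [Semiring A] [Algebra R A] {q : R} {x e z : A}

theorem pow_mul_eq_smul_mul_pow (hez : e * z = q • (z * e)) (n : ℕ) :
    e ^ n * z = q ^ n • (z * e ^ n) := by
  induction n with
  | zero => simp
  | succ n ih =>
    rw [pow_succ, mul_assoc, hez, mul_smul_comm, ← mul_assoc, ih, smul_mul_assoc, smul_smul,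
      mul_assoc, ← pow_succ, ← pow_succ']

theorem mul_pow_succ_eq_smul_add_smul (hxe : x * e = q • (e * x) + q • z)
    (hez : e * z = q • (z * e)) (n : ℕ) :
    x * e ^ (n + 1) = q ^ (n + 1) • (e ^ (n + 1) * x) +
      (∑ k ∈ Finset.range (n + 1), q ^ (2 * k + 1)) • (z * e ^ n) := by
  induction n with
  | zero => simpa using hxe
  | succ n ih =>
    calc x * e ^ (n + 2)
        = q ^ (n + 1) • (e ^ (n + 1) * (x * e)) +
            (∑ k ∈ Finset.range (n + 1), q ^ (2 * k + 1)) • (z * e ^ (n + 1)) := by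
          rw [pow_succ, ← mul_assoc, ih, add_mul, smul_mul_assoc, smul_mul_assoc, mul_assoc,
            mul_assoc, ← pow_succ]
      _ = q ^ (n + 2) • (e ^ (n + 2) * x) + q ^ (n + 2) • (e ^ (n + 1) * z) +
            (∑ k ∈ Finset.range (n + 1), q ^ (2 * k + 1)) • (z * e ^ (n + 1)) := by
          rw [hxe, mul_add, mul_smul_comm, mul_smul_comm, smul_add, smul_smul, smul_smul,
            ← mul_assoc, ← pow_succ, ← pow_succ]
      _ = q ^ (n + 2) • (e ^ (n + 2) * x) +
            (∑ k ∈ Finset.range (n + 2), q ^ (2 * k + 1)) • (z * e ^ (n + 1)) := by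
          rw [pow_mul_eq_smul_mul_pow hez, smul_smul, ← pow_add, Finset.sum_range_succ _ (n + 1),
            add_smul, add_assoc, add_comm (_ • _) (_ • _)]
          ring_nf

end Commutation

theorem qv_one_pow (n : ℕ) : qv 1 ^ n = qv n := by
  rw [qv, qv, zpow_one, zpow_natCast]

theorem intDegree_qv_natCast (n : ℕ) : (qv n).intDegree = n := by
  rw [← qv_one_pow, qv, zpow_one, ← RatFunc.algebraMap_X, ← map_pow, RatFunc.intDegree_polynomial,
    Polynomial.natDegree_X_pow]

theorem intDegree_qv (n : ℤ) : (qv n).intDegree = n := by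
  obtain ⟨n, rfl | rfl⟩ := Int.eq_nat_or_neg n
  · exact intDegree_qv_natCast n
  · rw [qv, zpow_neg, RatFunc.intDegree_inv, ← qv, intDegree_qv_natCast]

theorem qv_injective : Function.Injective qv :=
  fun a b h => by rw [← intDegree_qv a, h, intDegree_qv]

theorem qint_ne_zero {m : ℕ} (hm : m ≠ 0) : qint m ≠ 0 :=
  div_ne_zero (sub_ne_zero.mpr (qv_injective.ne (by omega)))
    (sub_ne_zero.mpr (qv_injective.ne (by omega)))

theorem qfact_succ_inv_mul_qint (n : ℕ) : (qfact (n + 1))⁻¹ * qint (n + 1) = (qfact n)⁻¹ := by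
  rw [qfact, Finset.prod_range_succ, ← qfact, mul_inv,
    inv_mul_cancel_right₀ (qint_ne_zero n.succ_ne_zero)]

theorem sum_qv_one_pow_odd (m : ℕ) :
    ∑ k ∈ Finset.range m, qv 1 ^ (2 * k + 1) = qv m * qint m := by
  have hd : qv 1 - qv (-1) ≠ 0 := sub_ne_zero.mpr (qv_injective.ne (by omega))
  induction m with
  | zero => simp [qint]
  | succ m ih =>
    rw [Finset.sum_range_succ, ih, qint, qint, mul_div_assoc', mul_div_assoc', div_add' _ _ _ hd,
      div_left_inj' hd]
    have hX : (RatFunc.X : RatFunc ℚ) ≠ 0 := RatFunc.X_ne_zero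
    simp only [qv, zpow_neg, zpow_natCast, zpow_one]
    field_simp
    ring

/-- Let `x, e, z` be elements of a `ℚ(v)`-algebra satisfying `x e = v e x + v z` and
`e z = v z e`.  Then for all `m ≥ 1`, `x e^{(m)} = v^m e^{(m)} x + v^m z e^{(m−1)}`. -/
theorem stmt9 {A : Type*} [Ring A] [Algebra (RatFunc ℚ) A] (x e z : A)
    (hxe : x * e = qv 1 • (e * x) + qv 1 • z)
    (hez : e * z = qv 1 • (z * e)) :
    ∀ m : ℕ, 1 ≤ m →
      x * dp e m = qv m • (dp e m * x) + qv m • (z * dp e (m - 1)) := by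
  intro m hm
  obtain ⟨n, rfl⟩ := Nat.exists_eq_add_of_le' hm
  simp only [Nat.add_sub_cancel, dp]
  rw [mul_smul_comm, mul_pow_succ_eq_smul_add_smul hxe hez, sum_qv_one_pow_odd, qv_one_pow,
    smul_add, smul_smul, smul_smul, mul_left_comm _ (qv _), qfact_succ_inv_mul_qint,
    smul_mul_assoc, mul_smul_comm, smul_smul, smul_smul, mul_comm (qfact (n + 1))⁻¹]
end
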